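/- Define h(n) = 2^{(log₂ n)^{8 + 4·log₂(log₂(log₂ n))}} for n ≥ 4, and t_i = 2^(2^(2^i)). Then for all i ≥ 2, h(t_{i-2}) ≥ t_{i + ⌊log₂ i⌋}. -/
import Mathlib


/-- t_i = 2^(2^(2^i)) -/
def tseq (i : ℕ) : ℕ := 2 ^ (2 ^ (2 ^ i))

/-- h(n) = 2^{(log₂ n)^{8 + 4·log₂(log₂(log₂ n))}} -/
noncomputable def hfun (n : ℝ) : ℝ :=
  (2 : ℝ) ^ ((Real.logb 2 n) ^ (8 + 4 * Real.logb 2 (Real.logb 2 (Real.logb 2 n))))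

lemma logb_two_pow (k : ℕ) : Real.logb 2 ((2:ℝ) ^ k) = k := by
  rw [Real.logb_pow, Real.logb_self_eq_one] <;> norm_num

lemma logb_two_pow' (k : ℕ) : Real.logb 2 (((2 ^ k : ℕ) : ℝ)) = k := by
  push_cast
  exact logb_two_pow k

theorem stmt_3 : ∀ i : ℕ, 2 ≤ i →
    hfun (tseq (i - 2)) ≥ (tseq (i + Nat.log 2 i) : ℝ) := by
  intro i hi
  obtain ⟨j, rfl⟩ : ∃ j, i = j + 2 := ⟨i - 2, by omega⟩
  have h2 : (0:ℝ) < 2 := by norm_num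
  have hcast : ((tseq j : ℕ) : ℝ) = (2:ℝ) ^ (2 ^ (2 ^ j)) := by
    simp [tseq]
  have hl1 : Real.logb 2 ((tseq j : ℕ) : ℝ) = (2:ℝ) ^ (2 ^ j) := by
    rw [hcast, logb_two_pow]; push_cast; ring
  have hval : hfun ((tseq j : ℕ) : ℝ)
      = (2:ℝ) ^ (((2 ^ (2 ^ (j+2) * (j+2)) : ℕ) : ℝ)) := by
    unfold hfun
    rw [hl1, logb_two_pow, logb_two_pow']
    rw [show (2:ℝ) ^ (2^j : ℕ) = (2:ℝ) ^ ((2^j : ℕ) : ℝ) from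
      (Real.rpow_natCast _ _).symm,
      ← Real.rpow_mul (le_of_lt h2)]
    rw [show ((2^j : ℕ):ℝ) * (8 + 4*(j:ℝ)) = ((2 ^ (j+2) * (j+2) : ℕ) : ℝ) by
      push_cast; ring]
    rw [Real.rpow_natCast (2:ℝ) (2 ^ (j+2) * (j+2))]
    congr 1
    push_cast
    ring
  rw [show (j + 2 - 2 : ℕ) = j by omega, hval]
  rw [ge_iff_le, show (2:ℝ) ^ (((2 ^ (2 ^ (j+2) * (j+2)) : ℕ) : ℝ))
      = ((2 ^ (2 ^ (2 ^ (j+2) * (j+2))) : ℕ) : ℝ) by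
    rw [Real.rpow_natCast]; norm_cast]
  have key : tseq (j + 2 + Nat.log 2 (j+2)) ≤ 2 ^ (2 ^ (2 ^ (j+2) * (j+2))) := by
    unfold tseq
    apply Nat.pow_le_pow_right (by norm_num)
    apply Nat.pow_le_pow_right (by norm_num)
    rw [pow_add]
    exact Nat.mul_le_mul_left _ (Nat.pow_log_le_self 2 (by omega))
  exact_mod_cast key
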